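/- arXiv:1003.5240 — 4 statements merged into one kernel-verified Lean document; each statement's English description precedes it below -/
import Mathlib

section
/- Let T be the infinite d-regular tree with d ≥ 3 and let A be any nonempty finite set of vertices of T (not necessarily connected). Then |∂A| ≥ (d-2)|A| + 2; in particular |∂A| ≥ (d-2)|A|. -/
/-- The edge boundary of a vertex set `A`: edges of `G` with exactly one endpoint in `A`,
recorded as ordered pairs oriented from inside `A` to outside `A`. -/
def edgeBoundary {V : Type*} (G : SimpleGraph V) (A : Set V) : Set (V × V) :=
  {p | p.1 ∈ A ∧ p.2 ∉ A ∧ G.Adj p.1 p.2}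

/-!
Count the `d * |A|` pairs `(v, w)` with `v ∈ A` and `w` adjacent to `v`: an edge inside `A` is
counted twice and a boundary edge once, so `d * |A| = 2 * e(A) + |∂A|`. The graph induced on `A`
is a finite forest, hence lies in a spanning tree of the complete graph on `A`, so
`e(A) ≤ |A| - 1`.
-/

open Finset

namespace SimpleGraph

variable {V : Type*} {G : SimpleGraph V}

theorem IsAcyclic.card_edgeSet_add_one_le [Finite V] [Nonempty V] (hG : G.IsAcyclic) :
    Nat.card G.edgeSet + 1 ≤ Nat.card V := by
  classical
  have := Fintype.ofFinite V
  obtain ⟨T, hGT, -, hT⟩ := connected_top.exists_isTree_le_of_le_of_isAcyclic le_top hG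
  rw [Nat.card_eq_fintype_card, Nat.card_eq_fintype_card, ← hT.card_edgeFinset,
    ← edgeFinset_card]
  gcongr

theorem IsAcyclic.card_edgeSet_induce_add_one_le (hG : G.IsAcyclic) {A : Finset V}
    (hA : A.Nonempty) : Nat.card (G.induce (A : Set V)).edgeSet + 1 ≤ #A := by
  have : Nonempty (A : Set V) := hA.to_subtype
  simpa using (hG.induce A).card_edgeSet_add_one_le

theorem degree_eq_ncard_neighborSet [G.LocallyFinite] (v : V) :
    G.degree v = (G.neighborSet v).ncard := by
  rw [← card_neighborSet_eq_degree, ← Nat.card_eq_fintype_card, Nat.card_coe_set_eq]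

variable [G.LocallyFinite] [DecidableEq V]

theorem ncard_edgeBoundary (A : Finset V) :
    (edgeBoundary G A).ncard = ∑ v ∈ A, #(G.neighborFinset v \ A) := by
  have : edgeBoundary G A = ↑((A.sigma fun v => G.neighborFinset v \ A).map
      (Equiv.sigmaEquivProd V V).toEmbedding) := by
    ext ⟨v, w⟩
    simp [edgeBoundary, and_comm]
  rw [this, Set.ncard_coe_finset, card_map, card_sigma]

theorem sum_inter_neighborFinset_eq_two_mul_card_edgeSet_induce (A : Finset V) :
    ∑ v ∈ A, #(G.neighborFinset v ∩ A) = 2 * Nat.card (G.induce (A : Set V)).edgeSet := by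
  classical
  rw [Nat.card_eq_fintype_card, ← edgeFinset_card, ← sum_degrees_eq_twice_card_edges,
    ← Finset.sum_coe_sort A]
  refine Fintype.sum_congr _ _ fun v => ?_
  rw [← card_neighborFinset_eq_degree, ← card_map (.subtype (· ∈ (A : Set V)))]
  congr 1
  ext w
  simp [and_comm]

theorem sum_degree_eq_two_mul_card_edgeSet_induce_add_ncard_edgeBoundary (A : Finset V) :
    ∑ v ∈ A, G.degree v =
      2 * Nat.card (G.induce (A : Set V)).edgeSet + (edgeBoundary G A).ncard := by
  simp_rw [← sum_inter_neighborFinset_eq_two_mul_card_edgeSet_induce, ncard_edgeBoundary,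
    ← sum_add_distrib, card_inter_add_card_sdiff, card_neighborFinset_eq_degree]

end SimpleGraph

open SimpleGraph in
theorem stmt2_general {V : Type*} (G : SimpleGraph V) (d : ℕ) (hd : 3 ≤ d)
    (hacyc : G.IsAcyclic)
    (hreg : ∀ v, (G.neighborSet v).ncard = d)
    (A : Finset V) (hA : A.Nonempty) :
    (d - 2) * A.card + 2 ≤ (edgeBoundary G (A : Set V)).ncard ∧
    (d - 2) * A.card ≤ (edgeBoundary G (A : Set V)).ncard := by
  classical
  -- `Set.ncard` of an infinite set is `0`, so `d ≠ 0` makes every neighbourhood finite.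
  let _ : G.LocallyFinite := fun v =>
    (Set.finite_of_ncard_ne_zero (by rw [hreg v]; omega) : (G.neighborSet v).Finite).fintype
  have hdeg (v : V) : G.degree v = d := (degree_eq_ncard_neighborSet v).trans (hreg v)
  have hcount := G.sum_degree_eq_two_mul_card_edgeSet_induce_add_ncard_edgeBoundary A
  simp only [hdeg, sum_const, smul_eq_mul] at hcount
  have hforest := hacyc.card_edgeSet_induce_add_one_le hA
  have hsplit : (d - 2) * #A + 2 * #A = #A * d := by
    rw [← add_mul, Nat.sub_add_cancel (by omega), mul_comm]
  omega

/-- In the infinite `d`-regular tree (`d ≥ 3`), any nonempty finite vertex set `A`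
(not necessarily connected) satisfies `|∂A| ≥ (d-2)|A| + 2`, in particular
`|∂A| ≥ (d-2)|A|`. -/
theorem stmt2 {V : Type*} [Infinite V] (G : SimpleGraph V) (d : ℕ) (hd : 3 ≤ d)
    (hconn : G.Connected) (hacyc : G.IsAcyclic)
    (hreg : ∀ v, (G.neighborSet v).ncard = d)
    (A : Finset V) (hA : A.Nonempty) :
    (d - 2) * A.card + 2 ≤ (edgeBoundary G (A : Set V)).ncard ∧
    (d - 2) * A.card ≤ (edgeBoundary G (A : Set V)).ncard :=
  stmt2_general G d hd hacyc hreg A hA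
end

section
/- Let G: ℕ → ℝ≥1 satisfy G(r) = e^{o(r)}, i.e., for every ε > 0 there is R with G(r) ≤ e^{εr} for all r ≥ R. If additionally G(2r) ≥ r^{-C₁}G(r)² for all r ≥ 2 (some constant C₁ > 0), then G(r) ≤ (4r)^{C₁} for all r ≥ 2. -/
/-!
Normalise `H r = G r / (4r)^C₁`. Since `(16r)^C₁ ≥ (8r)^C₁`, the recursion becomes `H (2r) ≥ H r ^ 2`,
so `H (2^k r) ≥ (H r)^(2^k)`. If `H r > 1`, this grows like `exp (c · 2^k)` along `n = 2^k r`,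
i.e. exponentially in `n`, contradicting `H ≤ G = e^{o(n)}`. Hence `H r ≤ 1`.
-/

open Real

def IsSubexponential (f : ℕ → ℝ) : Prop :=
  ∀ ε : ℝ, 0 < ε → ∃ R : ℕ, ∀ r : ℕ, R ≤ r → f r ≤ exp (ε * r)

theorem IsSubexponential.le_one_of_pow_two_pow_le {f : ℕ → ℝ} (hf : IsSubexponential f)
    {r : ℕ} (hr : 0 < r) {L : ℝ} (hL : ∀ k, L ^ 2 ^ k ≤ f (2 ^ k * r)) : L ≤ 1 := by
  by_contra! hL1
  have hlog : 0 < log L := log_pos hL1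
  -- this `ε` makes the bound at `n = 2^R r` equal to `L ^ (2^R / 2)`
  obtain ⟨R, hR⟩ := hf (log L / (2 * r)) (by positivity)
  have hRle : R ≤ 2 ^ R * r :=
    R.lt_two_pow_self.le.trans (Nat.le_mul_of_pos_right _ hr)
  have h2R : (1 : ℝ) ≤ 2 ^ R := one_le_pow₀ (by norm_num)
  have hexp : log L / (2 * r) * ((2 ^ R * r : ℕ) : ℝ) < (2 ^ R : ℕ) * log L := by
    push_cast
    field_simp
    nlinarith
  have hpow : exp ((2 ^ R : ℕ) * log L) = L ^ 2 ^ R := by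
    rw [exp_nat_mul, exp_log (by linarith)]
  exact ((hR _ hRle).trans_lt (exp_lt_exp.mpr hexp) |>.trans_le (hpow ▸ hL R)).false

theorem pow_two_pow_le_of_sq_le {f : ℕ → ℝ} {m : ℕ} (hf : ∀ r, m ≤ r → f r ^ 2 ≤ f (2 * r))
    (k : ℕ) {r : ℕ} (hr : m ≤ r) : f r ^ 2 ^ k ≤ f (2 ^ k * r) := by
  induction k generalizing r with
  | zero => simp
  | succ k ih =>
    calc f r ^ 2 ^ (k + 1) = (f r ^ 2) ^ 2 ^ k := by rw [pow_succ', pow_mul]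
      _ ≤ f (2 * r) ^ 2 ^ k := pow_le_pow_left₀ (sq_nonneg _) (hf r hr) _
      _ ≤ f (2 ^ k * (2 * r)) := ih (by omega)
      _ = f (2 ^ (k + 1) * r) := by rw [pow_succ, mul_assoc]

theorem div_rpow_sq_le_of_rpow_neg_mul_sq_le {C x a b : ℝ} (hC : 0 ≤ C) (hx : 0 < x)
    (h : x ^ (-C) * a ^ 2 ≤ b) : (a / (4 * x) ^ C) ^ 2 ≤ b / (4 * (2 * x)) ^ C := by
  have hid : x ^ (-C) * ((4 * x) ^ C) ^ 2 = (16 * x) ^ C := by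
    rw [sq, ← mul_rpow (by positivity) (by positivity), rpow_neg hx.le, ← inv_rpow hx.le,
      ← mul_rpow (by positivity) (by positivity)]
    congr 1
    field_simp
    ring
  have h8 : (4 * (2 * x)) ^ C ≤ (16 * x) ^ C := rpow_le_rpow (by positivity) (by linarith) hC
  rw [le_div_iff₀ (by positivity)]
  calc (a / (4 * x) ^ C) ^ 2 * (4 * (2 * x)) ^ C
      ≤ (a / (4 * x) ^ C) ^ 2 * (16 * x) ^ C := by gcongr
    _ = x ^ (-C) * a ^ 2 := by
      rw [← hid]
      field_simp
    _ ≤ b := h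

/-- If `G : ℕ → [1,∞)` satisfies `G(r) = e^{o(r)}` and the recursive inequality
`G(2r) ≥ r^{-C₁} G(r)²` for all `r ≥ 2`, then `G(r) ≤ (4r)^{C₁}` for all `r ≥ 2`. -/
theorem stmt9 (G : ℕ → ℝ) (hG : ∀ r, 1 ≤ G r) (C₁ : ℝ) (hC₁ : 0 < C₁)
    (hsub : ∀ ε : ℝ, 0 < ε → ∃ R : ℕ, ∀ r : ℕ, R ≤ r → G r ≤ Real.exp (ε * r))
    (hrec : ∀ r : ℕ, 2 ≤ r → (r : ℝ) ^ (-C₁) * G r ^ 2 ≤ G (2 * r)) :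
    ∀ r : ℕ, 2 ≤ r → G r ≤ ((4 * r : ℕ) : ℝ) ^ C₁ := by
  intro r hr
  set H : ℕ → ℝ := fun n => G n / ((4 * n : ℕ) : ℝ) ^ C₁
  have hHrec : ∀ n, 2 ≤ n → H n ^ 2 ≤ H (2 * n) := fun n hn => by
    simpa [H, mul_assoc] using
      div_rpow_sq_le_of_rpow_neg_mul_sq_le hC₁.le (by positivity) (hrec n hn)
  have hHsub : IsSubexponential H := fun ε hε => by
    obtain ⟨R, hR⟩ := hsub ε hε
    refine ⟨max R 1, fun n hn => (div_le_self (by linarith [hG n]) ?_).trans (hR n (by omega))⟩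
    exact one_le_rpow (by norm_cast; omega) hC₁.le
  have hHr : H r ≤ 1 :=
    hHsub.le_one_of_pow_two_pow_le (by omega) fun k => pow_two_pow_le_of_sq_le hHrec k hr
  exact (div_le_one (by positivity)).mp hHr
end

section
/- Let d ≥ 3 and s ≥ 1. In the infinite d-regular tree T with root 0, fix a vertex w. Then ∑ (d-1)^{-(|u| + d(u,v) + d(v,w))/2}, summed over all pairs of vertices u, v with |u| ≤ s and |v| ≤ s, is at most 3(s+1)^4 (d-1)^{-|w|/2}. -/
/-!
Write `|v| = d(r, v)` and `q = d - 1`. Since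
`|u| + d(u,v) + d(v,w) = |w| + (|v| + d(v,w) - |w|) + (|u| + d(u,v) - |v|)`, the double sum is at
most `q^{-|w|/2} B²` once `B` bounds `∑_{|v| ≤ s} q^{-(|v| + d(v,x) - |x|)/2}` uniformly in `x`.

On the sphere `|v| = n + 1` at most one vertex lies on the geodesic `[r, x]`, and its weight is `1`.
Any other vertex `v` is a child of a vertex `p` with `|p| = n`, and in a tree a step away from the
root that leaves `[r, x]` also moves away from `x`, so the weight of `v` is `q⁻¹` times that of `p`.
The root has at most `q + 1` children and every other vertex at most `q`, so the sphere sums are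
at most `n + d/(d-1) ≤ n + 3/2`. Hence `B = (s + 1)(s + 3/2)`, and `B² ≤ 3(s + 1)⁴`.
-/

open Finset

namespace SimpleGraph

variable {V : Type*} {G : SimpleGraph V}

theorem Connected.exists_adj_dist_eq_add_one (hG : G.Connected) {r v : V} (hv : r ≠ v) :
    ∃ p, G.Adj p v ∧ G.dist r v = G.dist r p + 1 := by
  obtain ⟨W, hW⟩ := hG.exists_walk_length_eq_dist v r
  cases W with
  | nil => exact absurd rfl hv
  | @cons _ p _ hadj W =>
    refine ⟨p, hadj.symm, le_antisymm ?_ ?_⟩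
    · calc G.dist r v ≤ G.dist r p + G.dist p v := hG.dist_triangle
        _ = G.dist r p + 1 := by rw [dist_eq_one_iff_adj.mpr hadj.symm]
    · have := dist_le W
      rw [Walk.length_cons, dist_comm] at hW
      rw [dist_comm]
      omega

theorem IsTree.eq_of_adj_of_dist_eq_add_one (hT : G.IsTree) {r v p₁ p₂ : V}
    (h₁ : G.Adj p₁ v) (h₂ : G.Adj p₂ v) (hd₁ : G.dist r v = G.dist r p₁ + 1)
    (hd₂ : G.dist r v = G.dist r p₂ + 1) : p₁ = p₂ := by
  obtain ⟨W₁, hW₁⟩ := hT.connected.exists_walk_length_eq_dist r p₁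
  obtain ⟨W₂, hW₂⟩ := hT.connected.exists_walk_length_eq_dist r p₂
  have hP₁ := (W₁.concat h₁).isPath_of_length_eq_dist (by rw [Walk.length_concat]; omega)
  have hP₂ := (W₂.concat h₂).isPath_of_length_eq_dist (by rw [Walk.length_concat]; omega)
  have := congrArg (fun P : G.Path r v => P.1.penultimate)
    ((hT.isAcyclic.subsingleton_path r v).elim ⟨_, hP₁⟩ ⟨_, hP₂⟩)
  simpa [Walk.penultimate_concat] using this

theorem IsTree.eq_of_dist_add_dist_eq (hT : G.IsTree) {r x v₁ v₂ : V}
    (h₁ : G.dist r v₁ + G.dist v₁ x = G.dist r x) (h₂ : G.dist r v₂ + G.dist v₂ x = G.dist r x)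
    (h : G.dist r v₁ = G.dist r v₂) : v₁ = v₂ := by
  obtain ⟨P₁, hP₁⟩ := hT.connected.exists_walk_length_eq_dist r v₁
  obtain ⟨Q₁, hQ₁⟩ := hT.connected.exists_walk_length_eq_dist v₁ x
  obtain ⟨P₂, hP₂⟩ := hT.connected.exists_walk_length_eq_dist r v₂
  obtain ⟨Q₂, hQ₂⟩ := hT.connected.exists_walk_length_eq_dist v₂ x
  have hW₁ := (P₁.append Q₁).isPath_of_length_eq_dist (by rw [Walk.length_append]; omega)
  have hW₂ := (P₂.append Q₂).isPath_of_length_eq_dist (by rw [Walk.length_append]; omega)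
  have := congrArg (fun W : G.Path r x => W.1.getVert (G.dist r v₁))
    ((hT.isAcyclic.subsingleton_path r x).elim ⟨_, hW₁⟩ ⟨_, hW₂⟩)
  simp only [Walk.getVert_append, hP₁, hP₂, h, lt_irrefl, if_false, Nat.sub_self,
    Walk.getVert_zero] at this
  exact this

theorem IsTree.dist_eq_dist_add_one_of_lt (hT : G.IsTree) {r x v p : V} (hadj : G.Adj p v)
    (hp : G.dist r v = G.dist r p + 1) (hx : G.dist r x < G.dist r v + G.dist v x) :
    G.dist v x = G.dist p x + 1 := by
  induction hk : G.dist v x using Nat.strong_induction_on generalizing v p with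
  | _ k ih =>
  have hpx := hT.dist_eq_dist_add_one_of_adj x hadj
  simp only [dist_comm (u := x)] at hpx
  refine hk ▸ hpx.resolve_left fun hpx => ?_
  have hvx : x ≠ v := by
    rintro rfl
    simp at hx
  -- `y` is the neighbour of `v` towards `x`; it cannot be the parent `p`, so `v` is its parent.
  obtain ⟨y, hyv, hy⟩ := hT.connected.exists_adj_dist_eq_add_one hvx
  simp only [dist_comm (u := x)] at hy
  rcases hT.dist_eq_dist_add_one_of_adj r hyv.symm with hry | hry
  · have := hT.eq_of_adj_of_dist_eq_add_one hadj hyv hp hry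
    subst this
    omega
  · have := ih (G.dist y x) (by omega) hyv.symm hry (by omega) rfl
    omega

/-- `G.dist r v + G.dist v x - G.dist r x` is twice the distance from `v` to the geodesic `[r, x]`;
the weight is `1` exactly on that geodesic. -/
noncomputable def geodesicWeight (G : SimpleGraph V) (q : ℝ) (r x v : V) : ℝ :=
  q ^ (-((G.dist r v : ℝ) + G.dist v x - G.dist r x) / 2)

section geodesicWeight

variable {q : ℝ} {r x v : V}

theorem geodesicWeight_nonneg (hq : 0 ≤ q) : 0 ≤ G.geodesicWeight q r x v :=
  Real.rpow_nonneg hq _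

theorem geodesicWeight_eq_one (h : G.dist r v + G.dist v x = G.dist r x) :
    G.geodesicWeight q r x v = 1 := by
  rw [geodesicWeight, ← h]
  push_cast
  simp

theorem IsTree.geodesicWeight_eq_inv_mul (hT : G.IsTree) (hq : 0 < q) {p : V} (hadj : G.Adj p v)
    (hp : G.dist r v = G.dist r p + 1) (hx : G.dist r x < G.dist r v + G.dist v x) :
    G.geodesicWeight q r x v = q⁻¹ * G.geodesicWeight q r x p := by
  have hvx := hT.dist_eq_dist_add_one_of_lt hadj hp hx
  rw [geodesicWeight, geodesicWeight, hp, hvx, ← Real.rpow_neg_one, ← Real.rpow_add hq]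
  push_cast
  ring_nf

theorem rpow_eq_mul_geodesicWeight_mul_geodesicWeight (hq : 0 < q) (r u v w : V) :
    q ^ (-((G.dist r u : ℝ) + G.dist u v + G.dist v w) / 2) =
      q ^ (-(G.dist r w : ℝ) / 2) * (G.geodesicWeight q r w v * G.geodesicWeight q r v u) := by
  rw [geodesicWeight, geodesicWeight, ← Real.rpow_add hq, ← Real.rpow_add hq, dist_comm (u := u)]
  ring_nf

end geodesicWeight

variable [G.LocallyFinite]

noncomputable def childFinset (G : SimpleGraph V) [G.LocallyFinite] (r p : V) : Finset V :=
  {v ∈ G.neighborFinset p | G.dist r v = G.dist r p + 1}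

noncomputable def sphereFinset [DecidableEq V] (G : SimpleGraph V) [G.LocallyFinite] (r : V) :
    ℕ → Finset V
  | 0 => {r}
  | n + 1 => (G.sphereFinset r n).biUnion (G.childFinset r)

noncomputable def ballFinset [DecidableEq V] (G : SimpleGraph V) [G.LocallyFinite] (r : V)
    (s : ℕ) : Finset V :=
  (range (s + 1)).biUnion (G.sphereFinset r)

section

variable {r p v : V}

@[simp]
theorem mem_childFinset : v ∈ G.childFinset r p ↔ G.Adj p v ∧ G.dist r v = G.dist r p + 1 := by
  simp [childFinset]

theorem card_childFinset_le_degree : #(G.childFinset r p) ≤ G.degree p :=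
  card_filter_le _ _

theorem Connected.card_childFinset_lt_degree (hG : G.Connected) (hp : r ≠ p) :
    #(G.childFinset r p) < G.degree p := by
  obtain ⟨p', hadj, hp'⟩ := hG.exists_adj_dist_eq_add_one hp
  exact card_lt_card (filter_ssubset.mpr ⟨p', by simpa using hadj.symm, by omega⟩)

variable [DecidableEq V]

theorem Connected.mem_sphereFinset (hG : G.Connected) {n : ℕ} :
    v ∈ G.sphereFinset r n ↔ G.dist r v = n := by
  induction n generalizing v with
  | zero => simp [sphereFinset, hG.dist_eq_zero_iff, eq_comm]
  | succ n ih =>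
    simp only [sphereFinset, mem_biUnion, mem_childFinset, ih]
    constructor
    · rintro ⟨p, rfl, -, hv⟩
      exact hv
    · intro hv
      have hrv : r ≠ v := by
        rintro rfl
        simp at hv
      obtain ⟨p, hadj, hp⟩ := hG.exists_adj_dist_eq_add_one hrv
      exact ⟨p, by omega, hadj, by omega⟩

theorem Connected.mem_ballFinset (hG : G.Connected) {s : ℕ} :
    v ∈ G.ballFinset r s ↔ G.dist r v ≤ s := by
  simp [ballFinset, hG.mem_sphereFinset]

end

variable [DecidableEq V]

theorem Connected.tsum_subtype_dist_le_eq_sum_ballFinset {M : Type*} [AddCommMonoid M]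
    [TopologicalSpace M] (hG : G.Connected) (r : V) (s : ℕ) (f : V × V → M) :
    ∑' p : {p : V × V // G.dist r p.1 ≤ s ∧ G.dist r p.2 ≤ s}, f p =
      ∑ v ∈ G.ballFinset r s, ∑ u ∈ G.ballFinset r s, f (u, v) := by
  let e : (G.ballFinset r s ×ˢ G.ballFinset r s : Finset (V × V)) ≃
      {p : V × V // G.dist r p.1 ≤ s ∧ G.dist r p.2 ≤ s} :=
    Equiv.subtypeEquivRight fun p => by simp [hG.mem_ballFinset]
  rw [← e.tsum_eq, ← sum_product_right]
  exact Finset.tsum_subtype _ f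

theorem IsTree.sum_sphereFinset_succ_le (hT : G.IsTree) {q : ℝ} (hq : 0 < q) (r x : V) (n : ℕ) :
    ∑ v ∈ G.sphereFinset r (n + 1), G.geodesicWeight q r x v ≤
      1 + q⁻¹ * ∑ p ∈ G.sphereFinset r n, #(G.childFinset r p) * G.geodesicWeight q r x p := by
  let onGeodesic v := G.dist r v + G.dist v x = G.dist r x
  rw [← sum_filter_add_sum_filter_not _ onGeodesic]
  have hon : ∑ v ∈ G.sphereFinset r (n + 1) with onGeodesic v, G.geodesicWeight q r x v ≤ 1 := by
    rw [sum_congr rfl fun v hv => geodesicWeight_eq_one (mem_filter.mp hv).2, sum_const,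
      nsmul_one, Nat.cast_le_one, card_le_one]
    intro v₁ hv₁ v₂ hv₂
    simp only [mem_filter, hT.connected.mem_sphereFinset] at hv₁ hv₂
    exact hT.eq_of_dist_add_dist_eq hv₁.2 hv₂.2 (hv₁.1.trans hv₂.1.symm)
  have hoff : ∑ v ∈ G.sphereFinset r (n + 1) with ¬onGeodesic v, G.geodesicWeight q r x v ≤
      q⁻¹ * ∑ p ∈ G.sphereFinset r n, #(G.childFinset r p) * G.geodesicWeight q r x p := by
    have hdisj : (G.sphereFinset r n : Set V).PairwiseDisjoint
        fun p => {v ∈ G.childFinset r p | ¬onGeodesic v} := by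
      intro p₁ _ p₂ _ hne
      refine Finset.disjoint_left.mpr fun v hv₁ hv₂ => hne ?_
      simp only [mem_filter, mem_childFinset] at hv₁ hv₂
      exact hT.eq_of_adj_of_dist_eq_add_one hv₁.1.1 hv₂.1.1 hv₁.1.2 hv₂.1.2
    rw [sphereFinset, filter_biUnion, sum_biUnion hdisj, mul_sum]
    gcongr with p hp
    have hweight : ∀ v ∈ {v ∈ G.childFinset r p | ¬onGeodesic v},
        G.geodesicWeight q r x v = q⁻¹ * G.geodesicWeight q r x p := by
      intro v hv
      simp only [mem_filter, mem_childFinset] at hv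
      have := hT.connected.dist_triangle (u := r) (v := v) (w := x)
      exact hT.geodesicWeight_eq_inv_mul hq hv.1.1 hv.1.2 (by omega)
    rw [sum_congr rfl hweight, sum_const, nsmul_eq_mul, mul_left_comm]
    gcongr
    · exact geodesicWeight_nonneg hq.le
    · exact filter_subset _ _
  linarith

section degree

variable {d : ℕ} (hT : G.IsTree) (hd : 2 ≤ d) (hdeg : ∀ v, G.degree v ≤ d) (r : V)
include hT hd hdeg

theorem IsTree.sum_sphereFinset_one_le (x : V) :
    ∑ v ∈ G.sphereFinset r 1, G.geodesicWeight (d - 1) r x v ≤ 1 + d / (d - 1) := by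
  refine (hT.sum_sphereFinset_succ_le (sub_pos.mpr (Nat.one_lt_cast.mpr hd)) r x 0).trans ?_
  rw [sphereFinset, sum_singleton, geodesicWeight_eq_one (by simp), mul_one, ← div_eq_inv_mul]
  gcongr
  · exact sub_nonneg.mpr (Nat.one_le_cast.mpr (by omega))
  · exact_mod_cast card_childFinset_le_degree.trans (hdeg r)

theorem IsTree.sum_sphereFinset_succ_succ_le (x : V) (n : ℕ) :
    ∑ v ∈ G.sphereFinset r (n + 2), G.geodesicWeight (d - 1) r x v ≤
      1 + ∑ v ∈ G.sphereFinset r (n + 1), G.geodesicWeight (d - 1) r x v := by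
  have hq : (0 : ℝ) < d - 1 := sub_pos.mpr (Nat.one_lt_cast.mpr hd)
  have hchild : ∀ p ∈ G.sphereFinset r (n + 1), (#(G.childFinset r p) : ℝ) ≤ d - 1 := by
    intro p hp
    have hrp : r ≠ p := by
      rintro rfl
      simp [hT.connected.mem_sphereFinset] at hp
    rw [le_sub_iff_add_le]
    exact_mod_cast (hT.connected.card_childFinset_lt_degree hrp).trans_le (hdeg p)
  calc ∑ v ∈ G.sphereFinset r (n + 2), G.geodesicWeight (d - 1) r x v
      ≤ 1 + ((d : ℝ) - 1)⁻¹ * ∑ p ∈ G.sphereFinset r (n + 1),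
          #(G.childFinset r p) * G.geodesicWeight (d - 1) r x p :=
        hT.sum_sphereFinset_succ_le hq r x (n + 1)
    _ ≤ 1 + ((d : ℝ) - 1)⁻¹ * ∑ p ∈ G.sphereFinset r (n + 1),
          (d - 1) * G.geodesicWeight (d - 1) r x p := by
        gcongr with p hp
        · exact geodesicWeight_nonneg hq.le
        · exact hchild p hp
    _ = 1 + ∑ p ∈ G.sphereFinset r (n + 1), G.geodesicWeight (d - 1) r x p := by
        rw [← mul_sum, inv_mul_cancel_left₀ hq.ne']

theorem IsTree.sum_sphereFinset_le (x : V) (n : ℕ) :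
    ∑ v ∈ G.sphereFinset r n, G.geodesicWeight (d - 1) r x v ≤ n + d / (d - 1) := by
  induction n with
  | zero =>
    rw [sphereFinset, sum_singleton, geodesicWeight_eq_one (by simp), Nat.cast_zero, zero_add,
      one_le_div (sub_pos.mpr (Nat.one_lt_cast.mpr hd))]
    linarith
  | succ n ih =>
    rcases n with _ | n
    · simpa using hT.sum_sphereFinset_one_le hd hdeg r x
    · have := hT.sum_sphereFinset_succ_succ_le hd hdeg r x n
      push_cast at ih ⊢
      linarith

theorem IsTree.sum_ballFinset_le (x : V) (s : ℕ) :
    ∑ v ∈ G.ballFinset r s, G.geodesicWeight (d - 1) r x v ≤ (s + 1) * (s + d / (d - 1)) := by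
  have hdisj : (range (s + 1) : Set ℕ).PairwiseDisjoint (G.sphereFinset r) := by
    intro m _ n _ hne
    refine Finset.disjoint_left.mpr fun v hm hn => hne ?_
    rw [hT.connected.mem_sphereFinset] at hm hn
    exact hm.symm.trans hn
  rw [ballFinset, sum_biUnion hdisj]
  calc ∑ n ∈ range (s + 1), ∑ v ∈ G.sphereFinset r n, G.geodesicWeight (d - 1) r x v
      ≤ ∑ _n ∈ range (s + 1), ((s : ℝ) + d / (d - 1)) := by
        gcongr with n hn
        refine (hT.sum_sphereFinset_le hd hdeg r x n).trans ?_
        gcongr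
        exact_mod_cast Nat.lt_succ_iff.mp (mem_range.mp hn)
    _ = (s + 1) * (s + d / (d - 1)) := by
        rw [sum_const, card_range, nsmul_eq_mul]
        push_cast
        ring

theorem IsTree.sum_ballFinset_sum_ballFinset_le (w : V) (s : ℕ) :
    ∑ v ∈ G.ballFinset r s, ∑ u ∈ G.ballFinset r s,
        ((d : ℝ) - 1) ^ (-((G.dist r u : ℝ) + G.dist u v + G.dist v w) / 2) ≤
      ((s + 1) * (s + d / (d - 1))) ^ 2 * ((d : ℝ) - 1) ^ (-(G.dist r w : ℝ) / 2) := by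
  have hq : (0 : ℝ) < d - 1 := sub_pos.mpr (Nat.one_lt_cast.mpr hd)
  have hball (x : V) := hT.sum_ballFinset_le hd hdeg r x s
  simp_rw [rpow_eq_mul_geodesicWeight_mul_geodesicWeight hq, ← mul_sum]
  rw [mul_comm]
  gcongr
  calc ∑ v ∈ G.ballFinset r s, G.geodesicWeight (d - 1) r w v *
        ∑ u ∈ G.ballFinset r s, G.geodesicWeight (d - 1) r v u
      ≤ ∑ v ∈ G.ballFinset r s,
          G.geodesicWeight (d - 1) r w v * ((s + 1) * (s + d / (d - 1))) := by
        gcongr with v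
        · exact geodesicWeight_nonneg hq.le
        · exact hball v
    _ ≤ ((s + 1) * (s + d / (d - 1))) ^ 2 := by
        rw [← sum_mul, sq]
        gcongr
        exact hball w

end degree

end SimpleGraph

open SimpleGraph

theorem stmt13_general {V : Type*} (G : SimpleGraph V) (d : ℕ) (hd : 3 ≤ d)
    (hconn : G.Connected) (hacyc : G.IsAcyclic)
    (hreg : ∀ v, (G.neighborSet v).ncard = d)
    (root w : V) (s : ℕ) :
    ∑' p : {p : V × V // G.dist root p.1 ≤ s ∧ G.dist root p.2 ≤ s},
        ((d : ℝ) - 1) ^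
          (-((G.dist root p.1.1 : ℝ) + (G.dist p.1.1 p.1.2 : ℝ) +
              (G.dist p.1.2 w : ℝ)) / 2) ≤
      3 * (s + 1 : ℝ) ^ 4 * ((d : ℝ) - 1) ^ (-(G.dist root w : ℝ) / 2) := by
  classical
  have hfin (v : V) : (G.neighborSet v).Finite := Set.finite_of_ncard_pos (by rw [hreg v]; omega)
  let : G.LocallyFinite := fun v => (hfin v).fintype
  have hdeg (v : V) : G.degree v ≤ d := by
    rw [← card_neighborSet_eq_degree, ← Nat.card_eq_fintype_card, Nat.card_coe_set_eq, hreg v]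
  have hd' : (3 : ℝ) ≤ d := by exact_mod_cast hd
  have hc : (d : ℝ) / (d - 1) ≤ 3 / 2 := by
    rw [div_le_iff₀ (by linarith)]
    linarith
  have hc₀ : 0 ≤ (d : ℝ) / (d - 1) := div_nonneg (by linarith) (by linarith)
  rw [hconn.tsum_subtype_dist_le_eq_sum_ballFinset root s fun p =>
    ((d : ℝ) - 1) ^ (-((G.dist root p.1 : ℝ) + G.dist p.1 p.2 + G.dist p.2 w) / 2)]
  refine ((IsTree.mk hconn hacyc).sum_ballFinset_sum_ballFinset_le (by omega) hdeg root w s).trans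
    (mul_le_mul_of_nonneg_right ?_ (Real.rpow_nonneg (by linarith) _))
  calc ((s + 1 : ℝ) * (s + d / (d - 1))) ^ 2
      ≤ ((s + 1) * (s + 3 / 2)) ^ 2 := by gcongr
    _ = (s + 1 : ℝ) ^ 2 * (s + 3 / 2) ^ 2 := by ring
    _ ≤ (s + 1 : ℝ) ^ 2 * (3 * (s + 1) ^ 2) := by
      gcongr
      nlinarith [(s.cast_nonneg : (0 : ℝ) ≤ s)]
    _ = 3 * (s + 1 : ℝ) ^ 4 := by ring

/-- In the infinite `d`-regular tree (`d ≥ 3`) with root `0` and a fixed vertex `w`,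
`∑_{|u|,|v| ≤ s} (d-1)^{-(|u| + d(u,v) + d(v,w))/2} ≤ 3(s+1)⁴ (d-1)^{-|w|/2}`. -/
theorem stmt13 {V : Type*} (G : SimpleGraph V) (d : ℕ) (hd : 3 ≤ d)
    (hconn : G.Connected) (hacyc : G.IsAcyclic)
    (hreg : ∀ v, (G.neighborSet v).ncard = d)
    (root w : V) (s : ℕ) (hs : 1 ≤ s) :
    ∑' p : {p : V × V // G.dist root p.1 ≤ s ∧ G.dist root p.2 ≤ s},
        ((d : ℝ) - 1) ^
          (-((G.dist root p.1.1 : ℝ) + (G.dist p.1.1 p.1.2 : ℝ) +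
              (G.dist p.1.2 w : ℝ)) / 2) ≤
      3 * (s + 1 : ℝ) ^ 4 * ((d : ℝ) - 1) ^ (-(G.dist root w : ℝ) / 2) :=
  stmt13_general G d hd hconn hacyc hreg root w s
end

section
/- For any vertices x, u, v, w of a tree, |u| + d(u,v) + d(v,w) ≥ |w|, where |·| denotes distance to a fixed root 0 and d is the tree metric. Moreover, writing a for the branch point of 0, u toward v and b for the branch point toward w, one has |u| + d(u,v) + d(v,w) ≥ 2d(a,u) + 2d(b,v) + |w|. -/
/-! Walking `0 → u → v → w` through the two branch points, `|u| + d(u,v) + d(v,w)` splits as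
`|a| + 2 d(a,u) + d(a,v) + d(v,b) + d(b,w)`; replacing `|a| + d(a,v) = |v| = |b| + d(b,v)` turns it
into `2 d(a,u) + 2 d(b,v) + |w|`, so the second inequality is in fact an equality and implies the
first. -/

namespace SimpleGraph

variable {V : Type*} (G : SimpleGraph V)

theorem dist_add_dist_add_dist_eq_of_medians {root u v w a b : V}
    (ha₁ : G.dist root u = G.dist root a + G.dist a u)
    (ha₂ : G.dist root v = G.dist root a + G.dist a v)
    (ha₃ : G.dist u v = G.dist u a + G.dist a v)
    (hb₁ : G.dist root v = G.dist root b + G.dist b v)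
    (hb₂ : G.dist root w = G.dist root b + G.dist b w)
    (hb₃ : G.dist v w = G.dist v b + G.dist b w) :
    G.dist root u + G.dist u v + G.dist v w =
      2 * G.dist a u + 2 * G.dist b v + G.dist root w := by
  rw [ha₁, ha₃, hb₃, hb₂, G.dist_comm (u := u), G.dist_comm (u := v)]
  omega

end SimpleGraph

theorem stmt14_general {V : Type*} (G : SimpleGraph V)
    (root u v w a b : V)
    (ha₁ : G.dist root u = G.dist root a + G.dist a u)
    (ha₂ : G.dist root v = G.dist root a + G.dist a v)
    (ha₃ : G.dist u v = G.dist u a + G.dist a v)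
    (hb₁ : G.dist root v = G.dist root b + G.dist b v)
    (hb₂ : G.dist root w = G.dist root b + G.dist b w)
    (hb₃ : G.dist v w = G.dist v b + G.dist b w) :
    G.dist root w ≤ G.dist root u + G.dist u v + G.dist v w ∧
    2 * G.dist a u + 2 * G.dist b v + G.dist root w ≤
      G.dist root u + G.dist u v + G.dist v w := by
  have h := G.dist_add_dist_add_dist_eq_of_medians ha₁ ha₂ ha₃ hb₁ hb₂ hb₃
  exact ⟨by omega, h.ge⟩

/-- In a tree with root `0`: for any vertices `u, v, w`,
`|u| + d(u,v) + d(v,w) ≥ |w|`.  Moreover, if `a` is the branch point (median) of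
`0, u, v` and `b` is the branch point (median) of `0, v, w`, then
`|u| + d(u,v) + d(v,w) ≥ 2·d(a,u) + 2·d(b,v) + |w|`.
(The median of three vertices is characterized by lying on all three pairwise geodesics.) -/
theorem stmt14 {V : Type*} (G : SimpleGraph V)
    (hconn : G.Connected) (hacyc : G.IsAcyclic)
    (root u v w a b : V)
    (ha₁ : G.dist root u = G.dist root a + G.dist a u)
    (ha₂ : G.dist root v = G.dist root a + G.dist a v)
    (ha₃ : G.dist u v = G.dist u a + G.dist a v)
    (hb₁ : G.dist root v = G.dist root b + G.dist b v)
    (hb₂ : G.dist root w = G.dist root b + G.dist b w)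
    (hb₃ : G.dist v w = G.dist v b + G.dist b w) :
    G.dist root w ≤ G.dist root u + G.dist u v + G.dist v w ∧
    2 * G.dist a u + 2 * G.dist b v + G.dist root w ≤
      G.dist root u + G.dist u v + G.dist v w :=
  stmt14_general G root u v w a b ha₁ ha₂ ha₃ hb₁ hb₂ hb₃
end
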